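/- Consider n > 1 prisoners and one room with a single switch whose initial state is unknown (either On or Off). Suppose each non-leader flips the switch Off→On at the first two opportunities (exactly twice in total), and the leader flips On→Off, counting these flips. Then at the moment the leader has performed his (2n-2)-nd flip On→Off, every prisoner has visited the room at least once, regardless of the initial switch state. -/
import Mathlib


/-- State of the one-room protocol with unknown starting switch position:
the switch, each non-leader's number of `Off → On` signals (at most 2),
and the leader's count of `On → Off` flips. -/
structure LightState2 (n : ℕ) where
  light : Bool
  flips : Fin n → ℕ
  count : ℕ

/-- One visit: the leader `L` turns the switch off (counting) whenever it is on;
a non-leader turns it on whenever he finds it off, but at most twice in total. -/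
def lightStep2 {n : ℕ} (L : Fin n) (p : Fin n) (s : LightState2 n) : LightState2 n :=
  if p = L then
    if s.light then { s with light := false, count := s.count + 1 } else s
  else
    if s.light = false ∧ s.flips p < 2 then
      { s with light := true, flips := Function.update s.flips p (s.flips p + 1) }
    else s

/-- Run the protocol along a schedule of visitors, from an arbitrary
(unknown) initial switch state `b`. -/
def lightRun2 {n : ℕ} (L : Fin n) (sch : ℕ → Fin n) (b : Bool) : ℕ → LightState2 n
  | 0 => ⟨b, fun _ => 0, 0⟩
  | t + 1 => lightStep2 L (sch t) (lightRun2 L sch b t)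

lemma lightRun2_inv {n : ℕ} (L : Fin n) (sch : ℕ → Fin n) (b : Bool) (t : ℕ) :
    (lightRun2 L sch b t).flips L = 0 ∧
    (∀ p, (lightRun2 L sch b t).flips p ≤ 2) ∧
    (lightRun2 L sch b t).count + (lightRun2 L sch b t).light.toNat
      = b.toNat + ∑ p, (lightRun2 L sch b t).flips p ∧
    (∀ p, 1 ≤ (lightRun2 L sch b t).flips p → ∃ t' < t, sch t' = p) ∧
    (1 ≤ (lightRun2 L sch b t).count → ∃ t' < t, sch t' = L) := by
  induction t with
  | zero => simp [lightRun2]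
  | succ t ih =>
    obtain ⟨h1, h2, h3, h4, h5⟩ := ih
    set s := lightRun2 L sch b t with hs
    have hstep : lightRun2 L sch b (t+1) = lightStep2 L (sch t) s := rfl
    rw [hstep]
    unfold lightStep2
    by_cases hL : sch t = L
    · by_cases hl : s.light
      · rw [if_pos hL, if_pos hl]
        refine ⟨h1, h2, ?_, ?_, ?_⟩
        · rw [hl] at h3
          simp only [Bool.toNat_false, Bool.toNat_true] at h3 ⊢
          omega
        · intro p hp
          obtain ⟨t', ht', hp'⟩ := h4 p hp
          exact ⟨t', by omega, hp'⟩
        · intro _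
          exact ⟨t, by omega, hL⟩
      · rw [if_pos hL, if_neg hl]
        refine ⟨h1, h2, h3, ?_, ?_⟩
        · intro p hp
          obtain ⟨t', ht', hp'⟩ := h4 p hp
          exact ⟨t', by omega, hp'⟩
        · intro hc
          obtain ⟨t', ht', hp'⟩ := h5 hc
          exact ⟨t', by omega, hp'⟩
    · simp only [if_neg hL]
      by_cases hc : s.light = false ∧ s.flips (sch t) < 2
      · simp only [if_pos hc]
        refine ⟨?_, ?_, ?_, ?_, ?_⟩
        · rw [Function.update_of_ne (fun h => hL h.symm)]; exact h1
        · intro p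
          by_cases hp : p = sch t
          · subst hp; rw [Function.update_self]; omega
          · rw [Function.update_of_ne hp]; exact h2 p
        · simp only [Bool.toNat_true]
          rw [Finset.sum_update_of_mem (Finset.mem_univ _)]
          have hsplit : ∑ p, s.flips p
              = ∑ p ∈ Finset.univ \ {sch t}, s.flips p + s.flips (sch t) :=
            Finset.sum_eq_sum_sdiff_singleton_add (Finset.mem_univ (sch t)) _
          rw [hc.1] at h3
          simp only [Bool.toNat_false] at h3
          omega
        · intro p hp
          by_cases hpe : p = sch t
          · exact ⟨t, by omega, hpe.symm⟩
          · rw [Function.update_of_ne hpe] at hp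
            obtain ⟨t', ht', hp'⟩ := h4 p hp
            exact ⟨t', by omega, hp'⟩
        · intro hcnt
          obtain ⟨t', ht', hp'⟩ := h5 hcnt
          exact ⟨t', by omega, hp'⟩
      · simp only [if_neg hc]
        refine ⟨h1, h2, h3, ?_, ?_⟩
        · intro p hp
          obtain ⟨t', ht', hp'⟩ := h4 p hp
          exact ⟨t', by omega, hp'⟩
        · intro hcnt
          obtain ⟨t', ht', hp'⟩ := h5 hcnt
          exact ⟨t', by omega, hp'⟩

/-- with `n > 1` prisoners and an unknown initial switch state,
when the leader performs his `(2n-2)`-nd flip `On → Off`, every prisoner has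
visited the room at least once, regardless of the initial state. -/
theorem one_room_unknown_start_correct (n : ℕ) (hn : 1 < n) (L : Fin n)
    (sch : ℕ → Fin n) (hsch : ∀ p : Fin n, {t | sch t = p}.Infinite)
    (b : Bool) (t : ℕ) (hcount : (lightRun2 L sch b t).count = 2 * n - 2) :
    ∀ p : Fin n, ∃ t' < t, sch t' = p := by
  obtain ⟨h1, h2, h3, h4, h5⟩ := lightRun2_inv L sch b t
  intro p
  by_cases hpL : p = L
  · subst hpL
    exact h5 (by omega)
  · apply h4 p
    by_contra hflip
    push_neg at hflip
    have hp0 : (lightRun2 L sch b t).flips p = 0 := by omega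
    obtain ⟨S, hS⟩ : ∃ S, S = (Finset.univ.erase L).erase p := ⟨_, rfl⟩
    have hsum : ∑ q, (lightRun2 L sch b t).flips q
        = ∑ q ∈ S, (lightRun2 L sch b t).flips q := by
      symm
      apply Finset.sum_subset (Finset.subset_univ S)
      intro q _ hq
      simp only [hS, Finset.mem_erase, Finset.mem_univ, and_true, not_and_or, not_ne_iff] at hq
      rcases hq with h | h
      · rw [h]; exact hp0
      · rw [h]; exact h1
    have hbound : ∑ q ∈ S, (lightRun2 L sch b t).flips q ≤ S.card * 2 := by
      calc ∑ q ∈ S, (lightRun2 L sch b t).flips q ≤ S.card • 2 :=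
            Finset.sum_le_card_nsmul S _ 2 (fun q _ => h2 q)
        _ = S.card * 2 := by simp
    have hcard : S.card = n - 2 := by
      rw [hS, Finset.card_erase_of_mem, Finset.card_erase_of_mem (Finset.mem_univ L)]
      · simp; omega
      · exact Finset.mem_erase.mpr ⟨hpL, Finset.mem_univ p⟩
    have hb : b.toNat ≤ 1 := Bool.toNat_le _
    have htot : (lightRun2 L sch b t).count ≤ b.toNat + S.card * 2 := by
      calc (lightRun2 L sch b t).count
          ≤ (lightRun2 L sch b t).count + (lightRun2 L sch b t).light.toNat :=
            Nat.le_add_right _ _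
        _ = b.toNat + ∑ q, (lightRun2 L sch b t).flips q := h3
        _ = b.toNat + ∑ q ∈ S, (lightRun2 L sch b t).flips q := by rw [hsum]
        _ ≤ b.toNat + S.card * 2 := Nat.add_le_add_left hbound _
    rw [hcount, hcard] at htot
    clear hsch h1 h3 h4 h5 hsum hbound hcard
    omega
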